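/- Let Σ' be an m×m diagonal matrix and W an m×m matrix. For the tensor T ∈ ℝ^{m×m×m} with T_{ijk} = (1/m) σ''_k W_{kj} W_{ki} (where σ''_k are scalars with |σ''_k| ≤ β), the (2,2,1)-norm satisfies ‖T‖_{2,2,1} ≤ (β/m)‖W‖², where ‖W‖ is the spectral norm. -/
import Mathlib


/-- The operator (spectral) norm of a real matrix, via its action on Euclidean spaces. -/
noncomputable def matOpNorm {m n : Type*} [Fintype m] [Fintype n] [DecidableEq n]
    (M : Matrix m n ℝ) : ℝ :=
  ‖LinearMap.toContinuousLinearMap (Matrix.toEuclideanLin M)‖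

/-- `(2,2,1)`-norm bound for the layer tensor `T_{ijk} = (1/m) σ''_k W_{kj} W_{ki}`
with `|σ''_k| ≤ β`: it is at most `(β/m) ‖W‖²`. -/
theorem stmt_14 (m : ℕ) (hm : 0 < m) (β : ℝ) (c : Fin m → ℝ) (hc : ∀ k, |c k| ≤ β)
    (W : Matrix (Fin m) (Fin m) ℝ)
    (T : Fin m → Fin m → Fin m → ℝ)
    (hT : T = fun i j k => (1 / (m : ℝ)) * c k * W k j * W k i) :
    ∀ (v₁ v₂ : EuclideanSpace ℝ (Fin m)), ‖v₁‖ = 1 → ‖v₂‖ = 1 →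
      ∑ k, |∑ i, ∑ j, T i j k * v₁ i * v₂ j| ≤ (β / m) * matOpNorm W ^ 2 := by
  intro v₁ v₂ hv₁ hv₂
  have hβ : 0 ≤ β := le_trans (abs_nonneg _) (hc ⟨0, hm⟩)
  have hm' : (0:ℝ) < m := by exact_mod_cast hm
  -- key: for unit v, ∑ k (W *ᵥ v) k ^ 2 ≤ matOpNorm W ^ 2
  have key : ∀ v : EuclideanSpace ℝ (Fin m), ‖v‖ = 1 →
      ∑ k, (W.mulVec v k) ^ 2 ≤ matOpNorm W ^ 2 := by
    intro v hv
    have h1 : ‖Matrix.toEuclideanLin W v‖ ≤ matOpNorm W := by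
      have h := (LinearMap.toContinuousLinearMap (Matrix.toEuclideanLin W)).le_opNorm v
      rw [hv, mul_one] at h
      exact h
    have h2 : ∑ k, (W.mulVec v k) ^ 2 = ‖Matrix.toEuclideanLin W v‖ ^ 2 := by
      rw [EuclideanSpace.norm_eq, Real.sq_sqrt (by positivity)]
      refine Finset.sum_congr rfl fun k _ => ?_
      have : Matrix.toEuclideanLin W v k = W.mulVec v k := rfl
      rw [this, Real.norm_eq_abs, sq_abs]
    rw [h2]
    exact pow_le_pow_left₀ (norm_nonneg _) h1 2
  have hu₁ := key v₁ hv₁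
  have hu₂ := key v₂ hv₂
  set u₁ := W.mulVec v₁ with hu1def
  set u₂ := W.mulVec v₂ with hu2def
  have hform : ∀ k, ∑ i, ∑ j, T i j k * v₁ i * v₂ j
      = (1 / (m:ℝ)) * c k * (u₁ k * u₂ k) := by
    intro k
    have : u₁ k * u₂ k = (∑ i, W k i * v₁ i) * (∑ j, W k j * v₂ j) := by
      simp [hu1def, hu2def, Matrix.mulVec, dotProduct]
    rw [this, Finset.sum_mul_sum, Finset.mul_sum]
    refine Finset.sum_congr rfl fun i _ => ?_
    rw [Finset.mul_sum]
    refine Finset.sum_congr rfl fun j _ => ?_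
    simp only [hT]
    ring
  calc ∑ k, |∑ i, ∑ j, T i j k * v₁ i * v₂ j|
      ≤ ∑ k, (β / m) * ((u₁ k ^ 2 + u₂ k ^ 2) / 2) := by
        refine Finset.sum_le_sum fun k _ => ?_
        rw [hform k, abs_mul, abs_mul]
        have h1 : |(1:ℝ) / m| * |c k| ≤ (1 / m) * β := by
          rw [abs_of_pos (by positivity)]
          exact mul_le_mul_of_nonneg_left (hc k) (by positivity)
        have h2 : |u₁ k * u₂ k| ≤ (u₁ k ^ 2 + u₂ k ^ 2) / 2 := by
          rw [abs_mul]
          nlinarith [sq_nonneg (|u₁ k| - |u₂ k|), sq_abs (u₁ k), sq_abs (u₂ k),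
            abs_nonneg (u₁ k), abs_nonneg (u₂ k)]
        calc |(1:ℝ)/m| * |c k| * |u₁ k * u₂ k| ≤ (1/m) * β * ((u₁ k ^ 2 + u₂ k ^ 2)/2) := by
              apply mul_le_mul h1 h2 (abs_nonneg _) (by positivity)
          _ = (β / m) * ((u₁ k ^ 2 + u₂ k ^ 2) / 2) := by ring
    _ = (β / m) * ((∑ k, u₁ k ^ 2) + (∑ k, u₂ k ^ 2)) / 2 := by
        rw [← Finset.mul_sum, ← Finset.sum_div, Finset.sum_add_distrib, mul_div_assoc]
    _ ≤ (β / m) * (matOpNorm W ^ 2 + matOpNorm W ^ 2) / 2 := by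
        have : (∑ k, u₁ k ^ 2) + (∑ k, u₂ k ^ 2) ≤ matOpNorm W ^ 2 + matOpNorm W ^ 2 :=
          add_le_add hu₁ hu₂
        have hbm : 0 ≤ β / m := by positivity
        nlinarith
    _ = (β / m) * matOpNorm W ^ 2 := by ring
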